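/- arXiv:1712.07783 — 2 statements merged into one kernel-verified Lean document; each statement's English description precedes it below -/
import Mathlib

section
/- Let p be an odd prime, R = F_p[u]/(u^2), θ an automorphism of R, and C a nonzero skew cyclic code of length n over R containing no monic polynomials. If a(x) = u·ā(x) is a polynomial of minimal degree in C with ā(x) ∈ F_p[x], then C = ⟨u ā(x)⟩ as a left R[x;θ]-submodule, and ā(x) divides x^n − 1 in F_p[x]. -/
open TrivSqZeroExt

theorem RingAut.one_apply' {R : Type*} [Ring R] (b : R) : (1 : RingAut R) b = b := rfl

/-- The skew polynomial ring `R[x;θ]`, as finitely supported coefficient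
sequences with multiplication twisted by the ring automorphism `θ`:
`(a x^i) * (b x^j) = a θ^i(b) x^{i+j}`. -/
def SkewPoly (R : Type*) [Ring R] (θ : RingAut R) : Type _ := ℕ →₀ R

namespace SkewPoly

variable {R : Type*} [Ring R] (θ : RingAut R)

/-- The skew-twisted convolution product. -/
noncomputable def mulAux (f g : ℕ →₀ R) : ℕ →₀ R :=
  f.sum fun i a => g.sum fun j b => Finsupp.single (i + j) (a * (θ ^ i) b)

theorem mulAux_zero_left (g : ℕ →₀ R) : mulAux θ 0 g = 0 := Finsupp.sum_zero_index

theorem mulAux_zero_right (f : ℕ →₀ R) : mulAux θ f 0 = 0 := by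
  simp [mulAux, Finsupp.sum_zero_index]

theorem mulAux_add_left (f f' g : ℕ →₀ R) :
    mulAux θ (f + f') g = mulAux θ f g + mulAux θ f' g := by
  unfold mulAux
  apply Finsupp.sum_add_index' <;> intros <;> simp [add_mul, Finsupp.single_add, Finsupp.sum_add]

theorem mulAux_add_right (f g g' : ℕ →₀ R) :
    mulAux θ f (g + g') = mulAux θ f g + mulAux θ f g' := by
  unfold mulAux
  rw [← Finsupp.sum_add]
  apply Finsupp.sum_congr
  intro i _
  apply Finsupp.sum_add_index' <;> intros <;> simp [mul_add, Finsupp.single_add]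

theorem one_mulAux (g : ℕ →₀ R) : mulAux θ (Finsupp.single 0 1) g = g := by
  unfold mulAux
  rw [Finsupp.sum_single_index]
  · simp [RingAut.one_apply', Finsupp.sum_single]
  · simp

theorem mulAux_one (f : ℕ →₀ R) : mulAux θ f (Finsupp.single 0 1) = f := by
  unfold mulAux
  have : ∀ i ∈ f.support, ((Finsupp.single 0 1 : ℕ →₀ R).sum fun j b =>
      Finsupp.single (i + j) (f i * (θ ^ i) b)) = Finsupp.single i (f i) := by
    intro i _
    rw [Finsupp.sum_single_index] <;> simp
  rw [Finsupp.sum_congr this, Finsupp.sum_single f]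

theorem mulAux_single_single (i j : ℕ) (a b : R) :
    mulAux θ (Finsupp.single i a) (Finsupp.single j b) =
      Finsupp.single (i + j) (a * (θ ^ i) b) := by
  unfold mulAux
  rw [Finsupp.sum_single_index, Finsupp.sum_single_index]
  · simp
  · rw [Finsupp.sum_single_index] <;> simp

theorem mulAux_assoc (f g h : ℕ →₀ R) :
    mulAux θ (mulAux θ f g) h = mulAux θ f (mulAux θ g h) := by
  induction f using Finsupp.induction_linear with
  | zero => simp [mulAux_zero_left]
  | add f f' hf hf' => simp [mulAux_add_left, hf, hf']
  | single i a =>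
    induction g using Finsupp.induction_linear with
    | zero => simp [mulAux_zero_left, mulAux_zero_right]
    | add g g' hg hg' => simp [mulAux_add_left, mulAux_add_right, hg, hg']
    | single j b =>
      induction h using Finsupp.induction_linear with
      | zero => simp [mulAux_zero_right]
      | add h h' hh hh' => simp [mulAux_add_right, hh, hh']
      | single k c =>
        rw [mulAux_single_single, mulAux_single_single, mulAux_single_single,
          mulAux_single_single]
        rw [add_assoc, mul_assoc, map_mul, pow_add]
        rfl

variable {θ}

noncomputable instance : AddCommGroup (SkewPoly R θ) := inferInstanceAs (AddCommGroup (ℕ →₀ R))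

/-- Reinterpret a skew polynomial as a finitely supported function. -/
def toFinsupp (f : SkewPoly R θ) : ℕ →₀ R := f

/-- Build a skew polynomial out of a finitely supported function. -/
def ofFinsupp (f : ℕ →₀ R) : SkewPoly R θ := f

noncomputable instance : Ring (SkewPoly R θ) where
  __ := (inferInstance : AddCommGroup (SkewPoly R θ))
  mul f g := mulAux θ (toFinsupp f) (toFinsupp g)
  one := Finsupp.single 0 1
  left_distrib f g h := mulAux_add_right θ (toFinsupp f) (toFinsupp g) (toFinsupp h)
  right_distrib f g h := mulAux_add_left θ (toFinsupp f) (toFinsupp g) (toFinsupp h)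
  zero_mul := mulAux_zero_left θ
  mul_zero := mulAux_zero_right θ
  mul_assoc := mulAux_assoc θ
  one_mul := one_mulAux θ
  mul_one := mulAux_one θ

variable (θ) in
/-- The constant skew polynomial `a`. -/
noncomputable def C (a : R) : SkewPoly R θ := ofFinsupp (Finsupp.single 0 a)

variable (θ) in
/-- The variable `x` of the skew polynomial ring. -/
noncomputable def X : SkewPoly R θ := ofFinsupp (Finsupp.single 1 1)

/-- The `n`-th coefficient of a skew polynomial. -/
def coeff (f : SkewPoly R θ) (n : ℕ) : R := toFinsupp f n

/-- The degree of a skew polynomial (`⊥` for the zero polynomial). -/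
def degree (f : SkewPoly R θ) : WithBot ℕ := (toFinsupp f).support.max

/-- The degree of a skew polynomial as a natural number. -/
def natDegree (f : SkewPoly R θ) : ℕ := WithBot.unbotD 0 (degree f)

/-- The leading coefficient of a skew polynomial. -/
def leadingCoeff (f : SkewPoly R θ) : R := coeff f (natDegree f)

/-- A skew polynomial is monic if its leading coefficient is `1`. -/
def Monic (f : SkewPoly R θ) : Prop := leadingCoeff f = 1

end SkewPoly

/-- The inclusion of `F_p[x]` into the skew polynomial ring
`(F_p + u F_p)[x;θ]` (coefficientwise `a ↦ a + u·0`); this is the natural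
embedding of `F_p[x]` as a subring of `R[x;θ]` since `θ` fixes `F_p`. -/
noncomputable def SkewPoly.ofPoly {p : ℕ}
    (θ : RingAut (DualNumber (ZMod p))) (f : Polynomial (ZMod p)) :
    SkewPoly (DualNumber (ZMod p)) θ :=
  SkewPoly.ofFinsupp
    (Finsupp.mapRange (inl : ZMod p → DualNumber (ZMod p)) (inl_zero (ZMod p)) f.toFinsupp.coeff)

/-- Reduction of a skew polynomial over `F_p + u F_p` modulo `u`, i.e. the
polynomial in `F_p[x]` whose coefficients are the first components of the
coefficients. -/
noncomputable def SkewPoly.fstPoly {p : ℕ}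
    {θ : RingAut (DualNumber (ZMod p))} (f : SkewPoly (DualNumber (ZMod p)) θ) :
    Polynomial (ZMod p) :=
  Polynomial.ofFinsupp (AddMonoidAlgebra.ofCoeff
    (Finsupp.mapRange TrivSqZeroExt.fst fst_zero (SkewPoly.toFinsupp f)))

/-!
The automorphism `θ` fixes `𝔽_p` and sends `u` to `λu` with `λ ≠ 0`, so the left multiples of
`u·ā(x)` include every `u·(g ā)(x)` with `g ∈ 𝔽_p[x]`. A nonzero element of `C` of degree `< n`
cannot have a unit leading coefficient (a unit multiple of it would be monic), so its leading
coefficient is `u·c`; by minimality its degree is at least `deg ā`, and subtracting a suitable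
left multiple of `a` lowers the degree. Induction on the degree puts `C` inside `⟨a⟩`. Dividing
`xⁿ - 1` by `ā` with remainder `r`, the polynomial `u·r` is congruent to a left multiple of `-a`
modulo `xⁿ - 1`, so it lies in `C` with degree below `deg a`; minimality forces `r = 0`.
-/

open scoped Polynomial

namespace SkewPoly

section Ring

variable {R : Type*} [Ring R] {θ : RingAut R}

def toPoly : SkewPoly R θ ≃+ R[X] where
  toFun f := ⟨.ofCoeff (toFinsupp f)⟩
  invFun q := ofFinsupp q.toFinsupp.coeff
  left_inv _ := rfl
  right_inv _ := rfl
  map_add' _ _ := Polynomial.ofFinsupp_add.symm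

theorem coeff_toPoly (f : SkewPoly R θ) (k : ℕ) : (toPoly f).coeff k = coeff f k := rfl

theorem degree_toPoly (f : SkewPoly R θ) : (toPoly f).degree = degree f := rfl

theorem natDegree_toPoly (f : SkewPoly R θ) : (toPoly f).natDegree = natDegree f := rfl

theorem leadingCoeff_toPoly (f : SkewPoly R θ) : (toPoly f).leadingCoeff = leadingCoeff f := rfl

theorem toPoly_single (i : ℕ) (a : R) :
    toPoly (ofFinsupp (Finsupp.single i a) : SkewPoly R θ) = Polynomial.monomial i a := by
  ext k
  rw [coeff_toPoly, Polynomial.coeff_monomial]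
  exact Finsupp.single_apply

theorem single_mul_single (i j : ℕ) (a b : R) :
    (ofFinsupp (Finsupp.single i a) : SkewPoly R θ) * ofFinsupp (Finsupp.single j b) =
      ofFinsupp (Finsupp.single (i + j) (a * (θ ^ i) b)) :=
  mulAux_single_single θ i j a b

theorem C_mul_X_pow (c : R) (k : ℕ) :
    C θ c * X θ ^ k = ofFinsupp (Finsupp.single k c) := by
  induction k with
  | zero => exact (single_mul_single 0 0 c 1).trans (by simp)
  | succ k ih => rw [pow_succ, ← mul_assoc, ih, X, single_mul_single, map_one, mul_one]

theorem toFinsupp_C_mul (c : R) (f : SkewPoly R θ) :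
    toFinsupp (C θ c * f) = c • toFinsupp f := by
  change mulAux θ (Finsupp.single 0 c) (toFinsupp f) = c • toFinsupp f
  rw [mulAux, Finsupp.sum_single_index (by simp), ← Finsupp.sum_single (toFinsupp f),
    Finsupp.smul_sum]
  simp [Finsupp.smul_single]

theorem toPoly_C_mul (c : R) (f : SkewPoly R θ) :
    toPoly (C θ c * f) = Polynomial.C c * toPoly f := by
  ext k
  rw [Polynomial.coeff_C_mul, coeff_toPoly, coeff_toPoly, coeff, toFinsupp_C_mul]
  rfl

theorem single_sub_single_mod_mem_span (n k : ℕ) (c : R) :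
    (ofFinsupp (Finsupp.single k c) : SkewPoly R θ) - ofFinsupp (Finsupp.single (k % n) c) ∈
      Ideal.span {X θ ^ n - 1} := by
  have hX : X θ ^ k - X θ ^ (k % n) =
      X θ ^ (k % n) * (∑ i ∈ Finset.range (k / n), (X θ ^ n) ^ i) * (X θ ^ n - 1) := by
    rw [mul_assoc, geom_sum_mul, ← pow_mul, mul_sub, mul_one, ← pow_add, Nat.mod_add_div]
  rw [← C_mul_X_pow, ← C_mul_X_pow, ← mul_sub, hX]
  exact Ideal.mul_mem_left _ _ (Ideal.mul_mem_left _ _ (Ideal.mem_span_singleton_self _))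

theorem exists_degree_lt_sub_mem_span {n : ℕ} (hn : 0 < n) (f : SkewPoly R θ) :
    ∃ r : SkewPoly R θ, degree r < n ∧ f - r ∈ Ideal.span {X θ ^ n - 1} := by
  refine ⟨ofFinsupp ((toFinsupp f).mapDomain (· % n)), ?_, ?_⟩
  · rw [← degree_toPoly, Polynomial.degree_lt_iff_coeff_zero]
    intro m hm
    refine Finsupp.mapDomain_of_notMem_range _ m ?_
    rintro ⟨k, rfl⟩
    exact absurd (Nat.mod_lt k hn) (not_lt.mpr hm)
  · have : f - ofFinsupp ((toFinsupp f).mapDomain (· % n)) = (toFinsupp f).sum fun k c =>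
        ofFinsupp (Finsupp.single k c) - ofFinsupp (Finsupp.single (k % n) c) := by
      rw [Finsupp.sum_sub]
      exact congrArg₂ (· - ·) (Finsupp.sum_single _).symm rfl
    rw [this]
    exact Submodule.finsuppSum_mem _ _ _ _ fun k _ => single_sub_single_mod_mem_span n k _

theorem exists_monic_C_mul {f : SkewPoly R θ} (hf : IsUnit (leadingCoeff f)) :
    ∃ v : R, Monic (C θ v * f) ∧ degree (C θ v * f) = degree f := by
  obtain ⟨u, hu⟩ := hf
  refine ⟨↑u⁻¹, ?_, ?_⟩
  · change (toPoly (C θ _ * f)).Monic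
    rw [toPoly_C_mul]
    exact Polynomial.monic_C_mul_of_mul_leadingCoeff_eq_one (by
      rw [leadingCoeff_toPoly, ← hu, Units.inv_mul])
  · rw [← degree_toPoly, toPoly_C_mul, Polynomial.degree_C_mul_of_isUnit u⁻¹.isUnit]
    rfl

theorem not_isUnit_leadingCoeff_of_mkQ_mem {I : Ideal (SkewPoly R θ)}
    {Code : Submodule (SkewPoly R θ) (SkewPoly R θ ⧸ I)} {d : WithBot ℕ}
    (hnomonic : ∀ f, I.mkQ f ∈ Code → degree f < d → ¬Monic f) {f : SkewPoly R θ}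
    (hf : I.mkQ f ∈ Code) (hdeg : degree f < d) : ¬IsUnit (leadingCoeff f) := by
  intro hu
  obtain ⟨v, hmonic, hdeg_eq⟩ := exists_monic_C_mul hu
  refine hnomonic _ ?_ (hdeg_eq ▸ hdeg) hmonic
  rw [← smul_eq_mul, map_smul]
  exact Code.smul_mem _ hf

theorem mem_span_singleton_of_exists_degree_sub_mul_lt {a : SkewPoly R θ}
    {P : SkewPoly R θ → Prop}
    (hP : ∀ f, P f → f ≠ 0 → ∃ q, P (f - q * a) ∧ degree (f - q * a) < degree f)
    (f : SkewPoly R θ) (hf : P f) : f ∈ Ideal.span {a} := by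
  induction f using (InvImage.wf degree wellFounded_lt).induction with
  | h f ih =>
    by_cases hf0 : f = 0
    · exact hf0 ▸ zero_mem _
    obtain ⟨q, hPq, hlt⟩ := hP f hf hf0
    rw [← sub_add_cancel f (q * a)]
    exact add_mem (ih _ hlt hPq) (Ideal.mul_mem_left _ _ (Ideal.mem_span_singleton_self a))

end Ring

end SkewPoly

namespace DualNumber

variable {p : ℕ}

theorem ringAut_apply_inl (θ : RingAut (DualNumber (ZMod p))) (c : ZMod p) :
    θ (inl c) = inl c := by
  obtain ⟨z, rfl⟩ := ZMod.intCast_surjective c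
  rw [inl_intCast, map_intCast]

def epsFactor (θ : RingAut (DualNumber (ZMod p))) : ZMod p := snd (θ ε)

variable [Fact p.Prime] (θ : RingAut (DualNumber (ZMod p)))

theorem ringAut_apply_eps : θ ε = inr (epsFactor θ) := by
  have hfst : fst (θ ε) = 0 := by
    rw [← mul_self_eq_zero, ← fst_mul, ← map_mul, eps_mul_eps, map_zero, fst_zero]
  ext
  · exact hfst
  · rfl

theorem epsFactor_ne_zero : epsFactor θ ≠ 0 := by
  intro h
  have : θ ε = θ 0 := by rw [ringAut_apply_eps, h, inr_zero, map_zero]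
  exact one_ne_zero (congrArg snd (θ.injective this))

theorem ringAut_apply_inr (c : ZMod p) : θ (inr c) = inr (epsFactor θ * c) := by
  have hc : (inr c : DualNumber (ZMod p)) = inl c * ε := by ext <;> simp
  rw [hc, map_mul, ringAut_apply_inl, ringAut_apply_eps, inl_mul_inr, smul_eq_mul, mul_comm]

theorem ringAut_pow_apply_inr (i : ℕ) (c : ZMod p) :
    (θ ^ i) (inr c) = inr (epsFactor θ ^ i * c) := by
  induction i generalizing c with
  | zero => simp
  | succ i ih => rw [pow_succ, RingAut.mul_apply, ringAut_apply_inr, ih, pow_succ, mul_assoc]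

end DualNumber

namespace SkewPoly

section DualNumber

open DualNumber

variable {p : ℕ} {θ : RingAut (DualNumber (ZMod p))}

variable (θ) in
noncomputable def uMul : (ZMod p)[X] →+ SkewPoly (DualNumber (ZMod p)) θ where
  toFun g := ofFinsupp (g.toFinsupp.coeff.mapRange inr (inr_zero _))
  map_zero' := Finsupp.mapRange_zero
  map_add' g h := by
    rw [Polynomial.toFinsupp_add, AddMonoidAlgebra.coeff_add]
    exact Finsupp.mapRange_add (inr_add _) _ _

theorem coeff_uMul (g : (ZMod p)[X]) (k : ℕ) : coeff (uMul θ g) k = inr (g.coeff k) :=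
  Finsupp.mapRange_apply (hf := inr_zero _)

theorem C_eps_mul_ofPoly (g : (ZMod p)[X]) : C θ ε * ofPoly θ g = uMul θ g := by
  refine toPoly.injective (Polynomial.ext fun k => ?_)
  rw [toPoly_C_mul, Polynomial.coeff_C_mul, coeff_toPoly, coeff_toPoly, coeff_uMul]
  change ε * inl (g.coeff k) = _
  ext <;> simp

theorem uMul_monomial (i : ℕ) (c : ZMod p) :
    uMul θ (Polynomial.monomial i c) = ofFinsupp (Finsupp.single i (inr c)) := by
  refine toPoly.injective (Polynomial.ext fun k => ?_)
  rw [coeff_toPoly, coeff_uMul, toPoly_single, Polynomial.coeff_monomial,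
    Polynomial.coeff_monomial]
  split_ifs <;> simp

theorem support_toPoly_uMul (g : (ZMod p)[X]) : (toPoly (uMul θ g)).support = g.support := by
  ext k
  rw [Polynomial.mem_support_iff, Polynomial.mem_support_iff, coeff_toPoly, coeff_uMul,
    Ne, Ne, inr_injective.eq_iff' (inr_zero _)]

theorem degree_uMul (g : (ZMod p)[X]) : degree (uMul θ g) = g.degree :=
  congrArg Finset.max (support_toPoly_uMul g)

theorem leadingCoeff_uMul (g : (ZMod p)[X]) : leadingCoeff (uMul θ g) = inr g.leadingCoeff := by
  have hnat : (toPoly (uMul θ g)).natDegree = g.natDegree :=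
    Polynomial.natDegree_eq_of_degree_eq (degree_uMul g)
  rw [← leadingCoeff_toPoly, Polynomial.leadingCoeff, hnat, coeff_toPoly, coeff_uMul]
  rfl

theorem uMul_injective : Function.Injective (uMul θ) :=
  (injective_iff_map_eq_zero _).mpr fun g hg => Polynomial.support_eq_empty.mp <| by
    rw [← support_toPoly_uMul (θ := θ), hg, map_zero, Polynomial.support_zero]

theorem uMul_X_pow_sub_one_mem_span (n : ℕ) :
    uMul θ (Polynomial.X ^ n - 1) ∈ Ideal.span {X θ ^ n - 1} := by
  have : uMul θ (Polynomial.X ^ n - 1) = C θ ε * (X θ ^ n - 1) := by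
    rw [map_sub, Polynomial.X_pow_eq_monomial, ← Polynomial.monomial_zero_one, uMul_monomial,
      uMul_monomial, mul_sub, mul_one, C_mul_X_pow]
    rfl
  rw [this]
  exact Ideal.mul_mem_left _ _ (Ideal.mem_span_singleton_self _)

variable [Fact p.Prime]

theorem single_inl_mul_uMul (i : ℕ) (d : ZMod p) (h : (ZMod p)[X]) :
    (ofFinsupp (Finsupp.single i (inl d)) : SkewPoly _ θ) * uMul θ h =
      uMul θ (Polynomial.monomial i (d * epsFactor θ ^ i) * h) := by
  induction h using Polynomial.induction_on' with
  | add f g hf hg => rw [map_add, mul_add, hf, hg, mul_add, map_add]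
  | monomial j c =>
    rw [uMul_monomial, single_mul_single, ringAut_pow_apply_inr, inl_mul_inr, smul_eq_mul,
      Polynomial.monomial_mul_monomial, uMul_monomial, mul_assoc]

theorem exists_mul_uMul (g h : (ZMod p)[X]) :
    ∃ Q : SkewPoly (DualNumber (ZMod p)) θ, Q * uMul θ h = uMul θ (g * h) := by
  induction g using Polynomial.induction_on' with
  | add f g hf hg =>
    obtain ⟨Q₁, hQ₁⟩ := hf
    obtain ⟨Q₂, hQ₂⟩ := hg
    exact ⟨Q₁ + Q₂, by rw [add_mul, hQ₁, hQ₂, add_mul, map_add]⟩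
  | monomial i c =>
    refine ⟨ofFinsupp (Finsupp.single i (inl (c / epsFactor θ ^ i))), ?_⟩
    rw [single_inl_mul_uMul, div_mul_cancel₀ _ (pow_ne_zero _ (epsFactor_ne_zero θ))]

theorem exists_degree_sub_mul_uMul_lt {f : SkewPoly (DualNumber (ZMod p)) θ} {g : (ZMod p)[X]}
    (hf : f ≠ 0) (hlc : ¬IsUnit (leadingCoeff f)) (hg : g ≠ 0) (hdeg : g.degree ≤ degree f) :
    ∃ Q, degree (f - Q * uMul θ g) < degree f := by
  have hf' : toPoly f ≠ 0 := (map_ne_zero_iff _ toPoly.injective).mpr hf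
  have hfst : fst (leadingCoeff f) = 0 := by
    rwa [isUnit_iff_isUnit_fst, isUnit_iff_ne_zero, not_not] at hlc
  set c := snd (leadingCoeff f)
  have hlcf : leadingCoeff f = inr c := by ext <;> simp [hfst, c]
  have hg' : g.leadingCoeff ≠ 0 := Polynomial.leadingCoeff_ne_zero.mpr hg
  set P := Polynomial.monomial (natDegree f - g.natDegree) (c / g.leadingCoeff) * g
  have hc : c ≠ 0 := by
    intro h
    rw [h, inr_zero, ← leadingCoeff_toPoly, Polynomial.leadingCoeff_eq_zero] at hlcf
    exact hf' hlcf
  have hPdeg : P.degree = degree f := by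
    have hle : g.natDegree ≤ natDegree f :=
      Polynomial.natDegree_le_natDegree (q := toPoly f) hdeg
    rw [Polynomial.degree_mul, Polynomial.degree_monomial _ (div_ne_zero hc hg'),
      Polynomial.degree_eq_natDegree hg, ← Nat.cast_add, Nat.sub_add_cancel hle,
      ← degree_toPoly, Polynomial.degree_eq_natDegree hf', natDegree_toPoly]
  have hPlc : P.leadingCoeff = c := by
    rw [Polynomial.leadingCoeff_mul, Polynomial.leadingCoeff_monomial, div_mul_cancel₀ _ hg']
  obtain ⟨Q, hQ⟩ : ∃ Q, Q * uMul θ g = uMul θ P := exists_mul_uMul _ g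
  refine ⟨Q, ?_⟩
  rw [hQ, ← degree_toPoly, map_sub]
  refine Polynomial.degree_sub_lt_left ?_ hf' ?_
  · rw [degree_toPoly, degree_toPoly, degree_uMul, hPdeg]
  · rw [leadingCoeff_toPoly, leadingCoeff_toPoly, leadingCoeff_uMul, hPlc, hlcf]

theorem mem_span_uMul_of_mkQ_mem {I : Ideal (SkewPoly (DualNumber (ZMod p)) θ)}
    {Code : Submodule (SkewPoly (DualNumber (ZMod p)) θ) (SkewPoly (DualNumber (ZMod p)) θ ⧸ I)}
    {d : WithBot ℕ} {abar : (ZMod p)[X]}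
    (hnomonic : ∀ f, I.mkQ f ∈ Code → degree f < d → ¬Monic f)
    (habar : abar ≠ 0) (haC : I.mkQ (uMul θ abar) ∈ Code)
    (hmin : ∀ b, I.mkQ b ∈ Code → b ≠ 0 → degree b < d → degree (uMul θ abar) ≤ degree b)
    {f : SkewPoly (DualNumber (ZMod p)) θ} (hf : I.mkQ f ∈ Code) (hdeg : degree f < d) :
    f ∈ Ideal.span {uMul θ abar} := by
  refine mem_span_singleton_of_exists_degree_sub_mul_lt
    (P := fun f => I.mkQ f ∈ Code ∧ degree f < d) (fun f ⟨hfC, hfd⟩ hf0 => ?_) f ⟨hf, hdeg⟩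
  obtain ⟨Q, hQ⟩ := exists_degree_sub_mul_uMul_lt hf0
    (not_isUnit_leadingCoeff_of_mkQ_mem hnomonic hfC hfd) habar
    (degree_uMul (θ := θ) abar ▸ hmin f hfC hf0 hfd)
  refine ⟨Q, ⟨?_, hQ.trans hfd⟩, hQ⟩
  rw [map_sub, ← smul_eq_mul, map_smul]
  exact sub_mem hfC (Code.smul_mem _ haC)

theorem dvd_X_pow_sub_one_of_minimal {n : ℕ} {abar : (ZMod p)[X]}
    {Code : Submodule (SkewPoly (DualNumber (ZMod p)) θ)
      (SkewPoly (DualNumber (ZMod p)) θ ⧸ Ideal.span {X θ ^ n - 1})}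
    (habar : abar ≠ 0) (haC : (Ideal.span {X θ ^ n - 1}).mkQ (uMul θ abar) ∈ Code)
    (hadeg : degree (uMul θ abar) < n)
    (hmin : ∀ b, (Ideal.span {X θ ^ n - 1}).mkQ b ∈ Code → b ≠ 0 → degree b < n →
      degree (uMul θ abar) ≤ degree b) :
    abar ∣ Polynomial.X ^ n - 1 := by
  rw [← EuclideanDomain.mod_eq_zero]
  by_contra hr
  set r := (Polynomial.X ^ n - 1) % abar
  have hrdeg : r.degree < abar.degree := Polynomial.degree_mod_lt _ habar
  obtain ⟨Q, hQ⟩ := exists_mul_uMul (θ := θ) ((Polynomial.X ^ n - 1) / abar) abar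
  have hur : uMul θ r = uMul θ (Polynomial.X ^ n - 1) - Q * uMul θ abar := by
    rw [hQ, ← map_sub, mul_comm, ← EuclideanDomain.mod_eq_sub_mul_div]
  have hrC : (Ideal.span {X θ ^ n - 1}).mkQ (uMul θ r) ∈ Code := by
    rw [hur, map_sub, Submodule.mkQ_apply, (Submodule.Quotient.mk_eq_zero _).mpr
      (uMul_X_pow_sub_one_mem_span n), zero_sub, ← smul_eq_mul, map_smul]
    exact neg_mem (Code.smul_mem _ haC)
  have hr_lt : degree (uMul θ r) < n := by
    rw [degree_uMul] at hadeg ⊢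
    exact hrdeg.trans hadeg
  have := hmin _ hrC ((map_ne_zero_iff _ uMul_injective).mpr hr) hr_lt
  rw [degree_uMul, degree_uMul] at this
  exact this.not_gt hrdeg

end DualNumber

end SkewPoly

open SkewPoly DualNumber in
theorem skew_code_no_monic_principal_general (p : ℕ) (hp : p.Prime)
    (θ : RingAut (DualNumber (ZMod p))) (n : ℕ) (hn : 0 < n)
    (Code : Submodule (SkewPoly (DualNumber (ZMod p)) θ)
      (SkewPoly (DualNumber (ZMod p)) θ ⧸ Ideal.span {SkewPoly.X θ ^ n - 1}))
    (hnomonic : ∀ f : SkewPoly (DualNumber (ZMod p)) θ,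
      (Ideal.span {SkewPoly.X θ ^ n - 1}).mkQ f ∈ Code →
        SkewPoly.degree f < (n : WithBot ℕ) → ¬ SkewPoly.Monic f)
    (abar : Polynomial (ZMod p))
    (a : SkewPoly (DualNumber (ZMod p)) θ)
    (ha : a = SkewPoly.C θ ε * SkewPoly.ofPoly θ abar) (ha0 : a ≠ 0)
    (haC : (Ideal.span {SkewPoly.X θ ^ n - 1}).mkQ a ∈ Code)
    (hadeg : SkewPoly.degree a < (n : WithBot ℕ))
    (hmin : ∀ b : SkewPoly (DualNumber (ZMod p)) θ,
      (Ideal.span {SkewPoly.X θ ^ n - 1}).mkQ b ∈ Code → b ≠ 0 →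
        SkewPoly.degree b < (n : WithBot ℕ) → SkewPoly.degree a ≤ SkewPoly.degree b) :
    Code = Submodule.span (SkewPoly (DualNumber (ZMod p)) θ)
        {(Ideal.span {SkewPoly.X θ ^ n - 1}).mkQ a} ∧
    abar ∣ (Polynomial.X ^ n - 1 : Polynomial (ZMod p)) := by
  have : Fact p.Prime := ⟨hp⟩
  rw [C_eps_mul_ofPoly] at ha
  subst ha
  have habar : abar ≠ 0 := by
    rintro rfl
    exact ha0 (map_zero _)
  refine ⟨le_antisymm (fun x hx => ?_) ((Submodule.span_singleton_le_iff_mem _ _).mpr haC),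
    dvd_X_pow_sub_one_of_minimal habar haC hadeg hmin⟩
  obtain ⟨f, rfl⟩ := Submodule.mkQ_surjective _ x
  obtain ⟨r, hr, hfr⟩ := exists_degree_lt_sub_mem_span hn f
  have hfr' : (Ideal.span {X θ ^ n - 1}).mkQ f = (Ideal.span {X θ ^ n - 1}).mkQ r :=
    (Submodule.Quotient.eq _).mpr hfr
  rw [hfr'] at hx ⊢
  obtain ⟨q, rfl⟩ := Ideal.mem_span_singleton'.mp
    (mem_span_uMul_of_mkQ_mem hnomonic habar haC hmin hx hr)
  rw [← smul_eq_mul, map_smul]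
  exact Submodule.smul_mem _ _ (Submodule.mem_span_singleton_self _)

open SkewPoly DualNumber in
/-- If a nonzero skew cyclic code `C ⊆ R[x;θ]/⟨xⁿ-1⟩` contains no monic
polynomial and `a(x) = u·ā(x)` is of minimal degree in `C`, then
`C = ⟨u ā(x)⟩` and `ā(x) ∣ xⁿ - 1` in `F_p[x]`. -/
theorem skew_code_no_monic_principal (p : ℕ) (hp : p.Prime) (hodd : p ≠ 2)
    (θ : RingAut (DualNumber (ZMod p))) (n : ℕ) (hn : 0 < n)
    (Code : Submodule (SkewPoly (DualNumber (ZMod p)) θ)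
      (SkewPoly (DualNumber (ZMod p)) θ ⧸ Ideal.span {SkewPoly.X θ ^ n - 1}))
    (hC : Code ≠ ⊥)
    (hnomonic : ∀ f : SkewPoly (DualNumber (ZMod p)) θ,
      (Ideal.span {SkewPoly.X θ ^ n - 1}).mkQ f ∈ Code →
        SkewPoly.degree f < (n : WithBot ℕ) → ¬ SkewPoly.Monic f)
    (abar : Polynomial (ZMod p))
    (a : SkewPoly (DualNumber (ZMod p)) θ)
    (ha : a = SkewPoly.C θ ε * SkewPoly.ofPoly θ abar) (ha0 : a ≠ 0)
    (haC : (Ideal.span {SkewPoly.X θ ^ n - 1}).mkQ a ∈ Code)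
    (hadeg : SkewPoly.degree a < (n : WithBot ℕ))
    (hmin : ∀ b : SkewPoly (DualNumber (ZMod p)) θ,
      (Ideal.span {SkewPoly.X θ ^ n - 1}).mkQ b ∈ Code → b ≠ 0 →
        SkewPoly.degree b < (n : WithBot ℕ) → SkewPoly.degree a ≤ SkewPoly.degree b) :
    Code = Submodule.span (SkewPoly (DualNumber (ZMod p)) θ)
        {(Ideal.span {SkewPoly.X θ ^ n - 1}).mkQ a} ∧
    abar ∣ (Polynomial.X ^ n - 1 : Polynomial (ZMod p)) :=
  skew_code_no_monic_principal_general p hp θ n hn Code hnomonic abar a ha ha0 haC hadeg hmin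
end

section
/- Let p be an odd prime and C = ⟨g(x)⟩ a skew cyclic code of length n over R = F_p[u]/(u^2), where g(x) ∈ R[x;θ] is monic of degree r and x^n − 1 = k(x) ∗ g(x) in R[x;θ]. Then β = { g(x), x∗g(x), ..., x^{n−r−1}∗g(x) } is a minimal generating set for C over R, and |C| = p^{2(n−r)}. -/
open TrivSqZeroExt

/-!
Comparing top coefficients in `xⁿ - 1 = k ∗ g` with `g` monic of degree `r` shows that `k` is
monic of degree `n - r`. Right division by `k` rewrites every codeword `a ∗ g` as `ρ ∗ g` with
`deg ρ < n - r`, because `(q ∗ k) ∗ g = q ∗ (xⁿ - 1)` vanishes in `R_n`. Conversely, if `ρ ∗ g`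
lies in `⟨xⁿ - 1⟩` with `deg ρ < n - r`, cancelling the monic `g` gives `ρ = q ∗ k`, and the top
coefficient of `q ∗ k` forces `q = 0`. Hence codewords correspond bijectively to the coefficient
vectors of `ρ` in `R^(n-r)`, and `|R| = p²`.
-/

namespace SkewPoly

variable {R : Type*} [Ring R] {θ : RingAut R}

@[ext]
theorem ext {f g : SkewPoly R θ} (h : ∀ m, f.coeff m = g.coeff m) : f = g := Finsupp.ext h

@[simp] theorem coeff_zero (m : ℕ) : (0 : SkewPoly R θ).coeff m = 0 := rfl

@[simp] theorem coeff_sub (f g : SkewPoly R θ) (m : ℕ) :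
    (f - g).coeff m = f.coeff m - g.coeff m := rfl

theorem coeff_sum {ι : Type*} (s : Finset ι) (f : ι → SkewPoly R θ) (m : ℕ) :
    (∑ i ∈ s, f i).coeff m = ∑ i ∈ s, (f i).coeff m :=
  Finset.sum_apply' m

theorem coeff_mul (f g : SkewPoly R θ) (m : ℕ) :
    (f * g).coeff m = ∑ i ∈ Finset.range (m + 1), f.coeff i * (θ ^ i) (g.coeff (m - i)) := by
  change mulAux θ (toFinsupp f) (toFinsupp g) m =
    ∑ i ∈ Finset.range (m + 1), toFinsupp f i * (θ ^ i) (toFinsupp g (m - i))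
  induction toFinsupp f using Finsupp.induction_linear with
  | zero => simp [mulAux_zero_left]
  | add f f' hf hf' => simp [mulAux_add_left, hf, hf', add_mul, Finset.sum_add_distrib]
  | single i a =>
    induction toFinsupp g using Finsupp.induction_linear with
    | zero => simp [mulAux_zero_right]
    | add g g' hg hg' => simp [mulAux_add_right, hg, hg', mul_add, Finset.sum_add_distrib]
    | single j b =>
      simp only [mulAux_single_single, Finsupp.single_apply, ite_mul, zero_mul,
        Finset.sum_ite_eq, Finset.mem_range]
      split_ifs <;> simp_all <;> omega

theorem coeff_mul_eq_zero_of_lt {f g : SkewPoly R θ} {a b m : ℕ}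
    (hf : ∀ i, a < i → f.coeff i = 0) (hg : ∀ j, b < j → g.coeff j = 0) (hm : a + b < m) :
    (f * g).coeff m = 0 := by
  rw [coeff_mul]
  refine Finset.sum_eq_zero fun i _ => ?_
  rcases le_or_gt i a with hi | hi
  · rw [hg (m - i) (by omega), map_zero, mul_zero]
  · rw [hf i hi, zero_mul]

theorem coeff_mul_add {f g : SkewPoly R θ} {a b : ℕ}
    (hf : ∀ i, a < i → f.coeff i = 0) (hg : ∀ j, b < j → g.coeff j = 0) :
    (f * g).coeff (a + b) = f.coeff a * (θ ^ a) (g.coeff b) := by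
  rw [coeff_mul, Finset.sum_eq_single a]
  · rw [Nat.add_sub_cancel_left]
  · intro i _ hia
    rcases lt_or_gt_of_ne hia with hi | hi
    · rw [hg (a + b - i) (by omega), map_zero, mul_zero]
    · rw [hf i hi, zero_mul]
  · simp

theorem coeff_eq_zero_of_natDegree_lt {f : SkewPoly R θ} {m : ℕ} (h : f.natDegree < m) :
    f.coeff m = 0 := by
  by_contra hm
  have hle := Finset.le_max (Finsupp.mem_support_iff.2 hm)
  rw [natDegree, degree] at h
  cases hmax : (toFinsupp f).support.max with
  | bot => simp [hmax] at hle
  | coe d => simp_all; omega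

theorem coeff_natDegree_ne_zero {f : SkewPoly R θ} (h : f ≠ 0) :
    f.coeff f.natDegree ≠ 0 := by
  obtain ⟨d, hd⟩ := Finset.max_of_nonempty (Finsupp.support_nonempty_iff.2 h)
  have hdeg : f.natDegree = d := by
    rw [natDegree, degree, show (toFinsupp f).support.max = d from hd]; rfl
  exact hdeg ▸ Finsupp.mem_support_iff.1 (Finset.mem_of_max hd)

theorem coeff_one (m : ℕ) : (1 : SkewPoly R θ).coeff m = if m = 0 then 1 else 0 := by
  change Finsupp.single 0 1 m = _
  rw [Finsupp.single_apply]
  exact if_congr eq_comm rfl rfl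

theorem X_pow_eq_ofFinsupp (k : ℕ) :
    (X θ ^ k : SkewPoly R θ) = ofFinsupp (Finsupp.single k 1) := by
  induction k with
  | zero => rfl
  | succ k ih =>
    rw [pow_succ, ih]
    change mulAux θ (Finsupp.single k 1) (Finsupp.single 1 1) = _
    rw [mulAux_single_single, map_one, mul_one]
    rfl

theorem coeff_C_mul_X_pow (a : R) (k m : ℕ) :
    (C θ a * X θ ^ k : SkewPoly R θ).coeff m = if m = k then a else 0 := by
  rw [X_pow_eq_ofFinsupp]
  change mulAux θ (Finsupp.single 0 a) (Finsupp.single k 1) m = _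
  rw [mulAux_single_single, pow_zero, RingAut.one_apply', mul_one, zero_add,
    Finsupp.single_apply]
  exact if_congr eq_comm rfl rfl

theorem coeff_X_pow (k m : ℕ) : (X θ ^ k : SkewPoly R θ).coeff m = if m = k then 1 else 0 := by
  rw [← coeff_C_mul_X_pow (1 : R), show C θ (1 : R) = 1 from rfl, one_mul]

structure IsMonicOfDegree (f : SkewPoly R θ) (d : ℕ) : Prop where
  coeff_eq_one : f.coeff d = 1
  coeff_eq_zero_of_lt : ∀ j, d < j → f.coeff j = 0

theorem Monic.isMonicOfDegree {f : SkewPoly R θ} (hf : f.Monic) :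
    f.IsMonicOfDegree f.natDegree :=
  ⟨hf, fun _ => coeff_eq_zero_of_natDegree_lt⟩

theorem isMonicOfDegree_X_pow_sub_one {n : ℕ} (hn : n ≠ 0) :
    (X θ ^ n - 1 : SkewPoly R θ).IsMonicOfDegree n :=
  ⟨by simp [coeff_X_pow, coeff_one, hn],
    fun j hj => by simp [coeff_X_pow, coeff_one, hj.ne', show j ≠ 0 by omega]⟩

variable (θ) in
noncomputable def ofFn {N : ℕ} (c : Fin N → R) : SkewPoly R θ :=
  ∑ i : Fin N, C θ (c i) * X θ ^ (i : ℕ)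

theorem coeff_ofFn {N : ℕ} (c : Fin N → R) (m : ℕ) :
    (ofFn θ c).coeff m = if h : m < N then c ⟨m, h⟩ else 0 := by
  simp only [ofFn, coeff_sum, coeff_C_mul_X_pow]
  split_ifs with h
  · rw [Finset.sum_eq_single ⟨m, h⟩ (fun i _ hi => if_neg fun him => hi (Fin.ext him.symm))
      (by simp), if_pos rfl]
  · exact Finset.sum_eq_zero fun i _ => if_neg (by omega)

theorem ofFn_sub {N : ℕ} (c c' : Fin N → R) : ofFn θ (c - c') = ofFn θ c - ofFn θ c' := by
  ext m
  simp only [coeff_ofFn, coeff_sub]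
  split_ifs <;> simp

theorem ofFn_injective {N : ℕ} : Function.Injective (ofFn θ : (Fin N → R) → SkewPoly R θ) := by
  intro c c' h
  funext i
  simpa [coeff_ofFn] using congrArg (coeff · i) h

theorem eq_ofFn_coeff {f : SkewPoly R θ} {N : ℕ} (hf : ∀ m, N ≤ m → f.coeff m = 0) :
    f = ofFn θ fun i : Fin N => f.coeff i := by
  ext m
  rw [coeff_ofFn]
  split_ifs with h
  · rfl
  · exact hf m (not_lt.1 h)

namespace IsMonicOfDegree

variable {f g k : SkewPoly R θ} {r s : ℕ}

theorem coeff_mul_add_eq (hk : k.IsMonicOfDegree s) (a : ℕ)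
    (hf : ∀ i, a < i → f.coeff i = 0) : (f * k).coeff (a + s) = f.coeff a := by
  rw [coeff_mul_add hf hk.coeff_eq_zero_of_lt, hk.coeff_eq_one, map_one, mul_one]

theorem eq_zero_of_coeff_mul_eq_zero (hk : k.IsMonicOfDegree s)
    (h : ∀ m, s ≤ m → (f * k).coeff m = 0) : f = 0 := by
  by_contra hf
  apply coeff_natDegree_ne_zero hf
  rw [← hk.coeff_mul_add_eq _ fun _ => coeff_eq_zero_of_natDegree_lt]
  exact h _ (Nat.le_add_left s _)

theorem mul_left_injective (hg : g.IsMonicOfDegree r) :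
    Function.Injective fun f : SkewPoly R θ => f * g := by
  intro f f' (h : f * g = f' * g)
  rw [← sub_eq_zero]
  refine hg.eq_zero_of_coeff_mul_eq_zero fun m _ => ?_
  rw [sub_mul, h, sub_self, coeff_zero]

theorem of_mul [Nontrivial R] {n : ℕ} (hg : g.IsMonicOfDegree r)
    (hkg : (k * g).IsMonicOfDegree n) : k.IsMonicOfDegree (n - r) := by
  have hk : k ≠ 0 := by
    rintro rfl
    simpa using hkg.coeff_eq_one
  have htop := hg.coeff_mul_add_eq k.natDegree fun _ => coeff_eq_zero_of_natDegree_lt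
  have hdeg : k.natDegree + r = n := by
    refine le_antisymm (not_lt.1 fun h => ?_) (not_lt.1 fun h => ?_)
    · exact coeff_natDegree_ne_zero hk (htop ▸ hkg.coeff_eq_zero_of_lt _ h)
    · exact one_ne_zero (hkg.coeff_eq_one ▸ coeff_mul_eq_zero_of_lt (a := k.natDegree)
        (fun _ => coeff_eq_zero_of_natDegree_lt) hg.coeff_eq_zero_of_lt h)
  refine ⟨?_, fun j hj => coeff_eq_zero_of_natDegree_lt (by omega)⟩
  rw [show n - r = k.natDegree by omega, ← htop, hdeg, hkg.coeff_eq_one]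

theorem exists_coeff_sub_mul_eq_zero (hk : k.IsMonicOfDegree s) (N : ℕ) :
    ∀ f : SkewPoly R θ, (∀ m, N + s ≤ m → f.coeff m = 0) →
      ∃ q, ∀ m, s ≤ m → (f - q * k).coeff m = 0 := by
  induction N with
  | zero => exact fun f hf => ⟨0, by simpa using hf⟩
  | succ N ih =>
    intro f hf
    -- cancel the coefficient of `x^(N + s)` with `f_(N+s) x^N ∗ k`
    set u : SkewPoly R θ := C θ (f.coeff (N + s)) * X θ ^ N
    have hu : ∀ i, N < i → u.coeff i = 0 := fun i hi => by
      rw [coeff_C_mul_X_pow, if_neg hi.ne']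
    obtain ⟨q, hq⟩ := ih (f - u * k) fun m hm => by
      rcases hm.eq_or_lt with rfl | hlt
      · rw [coeff_sub, hk.coeff_mul_add_eq N hu, coeff_C_mul_X_pow, if_pos rfl, sub_self]
      · rw [coeff_sub, hf m (by omega), coeff_mul_eq_zero_of_lt hu hk.coeff_eq_zero_of_lt hlt,
          sub_zero]
    exact ⟨q + u, by simpa [add_mul, sub_sub, add_comm] using hq⟩

theorem exists_eq_mul_add_ofFn (hk : k.IsMonicOfDegree s) (f : SkewPoly R θ) :
    ∃ (q : SkewPoly R θ) (c : Fin s → R), f = q * k + ofFn θ c := by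
  obtain ⟨q, hq⟩ := hk.exists_coeff_sub_mul_eq_zero (f.natDegree + 1) f
    fun m hm => coeff_eq_zero_of_natDegree_lt (by omega)
  exact ⟨q, _, by rw [← eq_ofFn_coeff hq, add_sub_cancel]⟩

end IsMonicOfDegree

section Code

variable {g k : SkewPoly R θ} {r s : ℕ}

theorem mem_span_mkQ_iff (hk : k.IsMonicOfDegree s) (x : SkewPoly R θ ⧸ Ideal.span {k * g}) :
    x ∈ Submodule.span (SkewPoly R θ) {(Ideal.span {k * g}).mkQ g} ↔
      ∃ c : Fin s → R, x = (Ideal.span {k * g}).mkQ (ofFn θ c * g) := by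
  rw [Submodule.mem_span_singleton]
  constructor
  · rintro ⟨a, rfl⟩
    obtain ⟨q, c, rfl⟩ := hk.exists_eq_mul_add_ofFn a
    refine ⟨c, ?_⟩
    rw [← map_smul, smul_eq_mul, Submodule.mkQ_apply, Submodule.mkQ_apply,
      Submodule.Quotient.eq, Ideal.mem_span_singleton']
    exact ⟨q, by rw [add_mul, add_sub_cancel_right, mul_assoc]⟩
  · rintro ⟨c, rfl⟩
    exact ⟨ofFn θ c, by rw [← map_smul, smul_eq_mul]⟩

theorem mkQ_ofFn_mul_injective (hg : g.IsMonicOfDegree r) (hk : k.IsMonicOfDegree s) :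
    Function.Injective fun c : Fin s → R => (Ideal.span {k * g}).mkQ (ofFn θ c * g) := by
  intro c c' h
  simp only [Submodule.mkQ_apply, Submodule.Quotient.eq, Ideal.mem_span_singleton'] at h
  obtain ⟨a, ha⟩ := h
  have hak : ofFn θ (c - c') = a * k :=
    hg.mul_left_injective (by simp only [ofFn_sub, sub_mul, ← ha, mul_assoc])
  have ha0 : a = 0 := hk.eq_zero_of_coeff_mul_eq_zero fun m hm => by
    rw [← hak, coeff_ofFn, dif_neg hm.not_gt]
  exact ofFn_injective (sub_eq_zero.1 (by rw [← ofFn_sub, hak, ha0, zero_mul]))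

theorem card_span_mkQ (hg : g.IsMonicOfDegree r) (hk : k.IsMonicOfDegree s) :
    Nat.card (Submodule.span (SkewPoly R θ) {(Ideal.span {k * g}).mkQ g}) = Nat.card R ^ s := by
  have hrange : (Submodule.span (SkewPoly R θ) {(Ideal.span {k * g}).mkQ g} : Set _) =
      Set.range fun c : Fin s → R => (Ideal.span {k * g}).mkQ (ofFn θ c * g) := by
    ext x
    rw [SetLike.mem_coe, mem_span_mkQ_iff hk, Set.mem_range]
    simp only [eq_comm]
  rw [← SetLike.coe_sort_coe, hrange, Nat.card_range_of_injective (mkQ_ofFn_mul_injective hg hk),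
    Nat.card_fun, Nat.card_fin]

end Code

end SkewPoly

open SkewPoly DualNumber in
theorem skew_code_monic_generating_set_general (p : ℕ) (hp : p.Prime)
    (θ : RingAut (DualNumber (ZMod p))) (n : ℕ) (hn : 0 < n)
    (g : SkewPoly (DualNumber (ZMod p)) θ) (hg : SkewPoly.Monic g)
    (r : ℕ) (hr : SkewPoly.natDegree g = r)
    (k : SkewPoly (DualNumber (ZMod p)) θ) (hk : SkewPoly.X θ ^ n - 1 = k * g)
    (Code : Submodule (SkewPoly (DualNumber (ZMod p)) θ)
      (SkewPoly (DualNumber (ZMod p)) θ ⧸ Ideal.span {SkewPoly.X θ ^ n - 1}))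
    (hCode : Code = Submodule.span (SkewPoly (DualNumber (ZMod p)) θ)
      {(Ideal.span {SkewPoly.X θ ^ n - 1}).mkQ g}) :
    (∀ x : SkewPoly (DualNumber (ZMod p)) θ ⧸ Ideal.span {SkewPoly.X θ ^ n - 1},
      x ∈ Code ↔ ∃! c : Fin (n - r) → DualNumber (ZMod p),
        x = (Ideal.span {SkewPoly.X θ ^ n - 1}).mkQ
          (∑ i : Fin (n - r), SkewPoly.C θ (c i) * SkewPoly.X θ ^ (i : ℕ) * g)) ∧
    Nat.card Code = p ^ (2 * (n - r)) := by
  have : Fact p.Prime := ⟨hp⟩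
  have hg' : g.IsMonicOfDegree r := hr ▸ hg.isMonicOfDegree
  have hk' : k.IsMonicOfDegree (n - r) := hg'.of_mul (hk ▸ isMonicOfDegree_X_pow_sub_one hn.ne')
  have hsum (c : Fin (n - r) → DualNumber (ZMod p)) :
      ∑ i : Fin (n - r), C θ (c i) * X θ ^ (i : ℕ) * g = ofFn θ c * g :=
    (Finset.sum_mul ..).symm
  have hcard : Nat.card (DualNumber (ZMod p)) = p ^ 2 := by
    change Nat.card (ZMod p × ZMod p) = p ^ 2
    rw [Nat.card_prod, Nat.card_zmod, sq]
  simp only [hsum]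
  generalize X θ ^ n - 1 = f at Code hCode hk ⊢
  subst hk hCode
  refine ⟨fun x => ?_, by rw [card_span_mkQ hg' hk', hcard, pow_mul]⟩
  rw [mem_span_mkQ_iff hk']
  exact ⟨fun ⟨c, hc⟩ => ⟨c, hc, fun c' hc' => mkQ_ofFn_mul_injective hg' hk' (hc'.symm.trans hc)⟩,
    ExistsUnique.exists⟩

open SkewPoly DualNumber in
/-- For the code `C = ⟨g(x)⟩` with `g` monic of degree `r` and
`xⁿ - 1 = k(x) ∗ g(x)` in `R[x;θ]`, the set `β = {g, x∗g, …, x^{n-r-1}∗g}`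
is a minimal generating set over `R` (every codeword has a unique
representation as an `R`-combination of `β`), and `|C| = p^{2(n-r)}`. -/
theorem skew_code_monic_generating_set (p : ℕ) (hp : p.Prime) (hodd : p ≠ 2)
    (θ : RingAut (DualNumber (ZMod p))) (n : ℕ) (hn : 0 < n)
    (g : SkewPoly (DualNumber (ZMod p)) θ) (hg : SkewPoly.Monic g)
    (r : ℕ) (hr : SkewPoly.natDegree g = r) (hrn : r ≤ n)
    (k : SkewPoly (DualNumber (ZMod p)) θ) (hk : SkewPoly.X θ ^ n - 1 = k * g)
    (Code : Submodule (SkewPoly (DualNumber (ZMod p)) θ)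
      (SkewPoly (DualNumber (ZMod p)) θ ⧸ Ideal.span {SkewPoly.X θ ^ n - 1}))
    (hCode : Code = Submodule.span (SkewPoly (DualNumber (ZMod p)) θ)
      {(Ideal.span {SkewPoly.X θ ^ n - 1}).mkQ g}) :
    (∀ x : SkewPoly (DualNumber (ZMod p)) θ ⧸ Ideal.span {SkewPoly.X θ ^ n - 1},
      x ∈ Code ↔ ∃! c : Fin (n - r) → DualNumber (ZMod p),
        x = (Ideal.span {SkewPoly.X θ ^ n - 1}).mkQ
          (∑ i : Fin (n - r), SkewPoly.C θ (c i) * SkewPoly.X θ ^ (i : ℕ) * g)) ∧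
    Nat.card Code = p ^ (2 * (n - r)) :=
  skew_code_monic_generating_set_general p hp θ n hn g hg r hr k hk Code hCode
end
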